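/- Let V ⊆ ℝ^n be a nonempty open convex subset, k ≥ 1, and let ω : V × V → Λ^k be a map into the alternating k-multilinear real forms on ℝ^n. Define F_k ω : V^{k+2} → ℝ by (F_k ω)(v, q_1, …, q_k, w) = (ω(v,w))(q_1 − v, …, q_k − v), and define G_k χ for χ : V^{k+2} → ℝ (whenever the derivatives below exist) by (G_k χ)(v,w) = Σ_{i_1, …, i_k = 1}^{n} e^{i_1} ∧ ⋯ ∧ e^{i_k} · ∫_0^1 dt_1 ∫_0^{t_1} dt_2 ⋯ ∫_0^{t_{k−1}} dt_k (∂^k χ / ∂q_1^{i_1} ⋯ ∂q_k^{i_k})(v, t_1 v + (1−t_1) w, …, t_k v + (1−t_k) w, w). Then all the iterated partial derivatives of F_k ω occurring above exist, and G_k(F_k ω) = ω, i.e. (G_k(F_k ω))(v,w) = ω(v,w) for all (v,w) ∈ V × V. -/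

import Mathlib

namespace Stmt19

noncomputable section

/-- The chain map `F_k` from the Koszul to the bar complex:
`(F_k ω)(v, q_1, …, q_k, w) = (ω(v,w))(q_1 − v, …, q_k − v)`. -/
def Fmap (n k : ℕ)
    (ω : (Fin n → ℝ) → (Fin n → ℝ) → ((Fin k → (Fin n → ℝ)) → ℝ)) :
    (Fin (k+2) → (Fin n → ℝ)) → ℝ :=
  fun x => ω (x 0) (x (Fin.last (k+1)))
    (fun l => x ⟨(l : ℕ) + 1, by have := l.isLt; omega⟩ - x 0)

/-- Iterated (line-)directional derivatives along a given list of directions. -/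
def multiLineDeriv {D : Type*} [NormedAddCommGroup D] [NormedSpace ℝ D] :
    (m : ℕ) → (Fin m → D) → (D → ℝ) → (D → ℝ)
  | 0, _, χ => χ
  | m+1, vs, χ => fun x =>
      lineDeriv ℝ (multiLineDeriv m (fun j => vs j.succ) χ) x (vs 0)

/-- The iterated integral `∫_0^c dt_1 ∫_0^{t_1} dt_2 ⋯ ∫_0^{t_{m-1}} dt_m f(t_1,…,t_m)`. -/
def iterInt : (m : ℕ) → ℝ → ((Fin m → ℝ) → ℝ) → ℝ
  | 0, _, f => f (fun i => i.elim0)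
  | m+1, c, f => ∫ t in (0:ℝ)..c, iterInt m t (fun s => f (Fin.cons t s))

/-- The coordinate direction `∂/∂ q_l^i`: the basis tangent vector sitting in the `l`-th
intermediate slot (slot `l+1` of `Fin (k+2)`) in the `i`-th coordinate direction. -/
def basisVec (n k : ℕ) (l : Fin k) (i : Fin n) : Fin (k+2) → (Fin n → ℝ) :=
  Pi.single (⟨(l : ℕ) + 1, by have := l.isLt; omega⟩ : Fin (k+2)) (Pi.single i (1 : ℝ))

/-- The point `(v, t_1 v + (1−t_1) w, …, t_k v + (1−t_k) w, w)` of `V^{k+2}`. -/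
def segPoint (n k : ℕ) (v w : Fin n → ℝ) (t : Fin k → ℝ) : Fin (k+2) → (Fin n → ℝ) :=
  fun j =>
    if _h0 : (j : ℕ) = 0 then v
    else if _hl : (j : ℕ) = k + 1 then w
    else t ⟨(j : ℕ) - 1, by have := j.isLt; omega⟩ • v
      + (1 - t ⟨(j : ℕ) - 1, by have := j.isLt; omega⟩) • w

/-- The point `(v, q_1, …, q_k, w)` of `V^{k+2}`. -/
def assembleQ (n k : ℕ) (v w : Fin n → ℝ) (q : Fin k → (Fin n → ℝ)) :
    Fin (k+2) → (Fin n → ℝ) :=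
  fun j =>
    if _h0 : (j : ℕ) = 0 then v
    else if _hl : (j : ℕ) = k + 1 then w
    else q ⟨(j : ℕ) - 1, by have := j.isLt; omega⟩

section AuxLemmas

variable {D : Type*} [NormedAddCommGroup D] [NormedSpace ℝ D]

/-- `multiLineDeriv` only depends on the values of the function on the affine subspace
through `x` spanned by the directions. -/
lemma multiLineDeriv_congr : ∀ (m : ℕ) (vs : Fin m → D) (χ₁ χ₂ : D → ℝ) (x : D),
    (∀ t : Fin m → ℝ, χ₁ (x + ∑ j, t j • vs j) = χ₂ (x + ∑ j, t j • vs j)) →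
    multiLineDeriv m vs χ₁ x = multiLineDeriv m vs χ₂ x
  | 0, vs, χ₁, χ₂, x, h => by
      have := h 0
      simpa [multiLineDeriv] using this
  | m+1, vs, χ₁, χ₂, x, h => by
      simp only [multiLineDeriv, lineDeriv]
      congr 1
      funext t
      apply multiLineDeriv_congr m _ _ _ _
      intro s
      have := h (Fin.cons t s)
      simpa [Fin.sum_univ_succ, add_assoc] using this

/-- The line derivative of a function that is affine along the given line. -/
lemma lineDeriv_affine (g : D → ℝ) (x v : D) (A B : ℝ)
    (h : ∀ t : ℝ, g (x + t • v) = A + t * B) :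
    lineDeriv ℝ g x v = B := by
  have hfun : (fun t : ℝ => g (x + t • v)) = fun t => A + t * B := funext h
  rw [lineDeriv, hfun]
  simpa using (((hasDerivAt_id (0:ℝ)).mul_const B).const_add A).deriv

/-- Iterated directional derivatives of a multilinear map precomposed with slot
selection, along basis directions placed in the corresponding (pairwise distinct)
slots, recover the value of the multilinear map on the direction vectors. -/
lemma multiLineDeriv_multilinear {E : Type*} [NormedAddCommGroup E] [NormedSpace ℝ E] :
    ∀ (m N : ℕ) (f : MultilinearMap ℝ (fun _ : Fin m => E) ℝ)
      (p : Fin m → Fin N) (_hp : Function.Injective p) (c : E) (u : Fin m → E)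
      (x : Fin N → E),
    multiLineDeriv m (fun j => Pi.single (p j) (u j))
      (fun z => f (fun l => z (p l) - c)) x = f u
  | 0, N, f, p, hp, c, u, x => by
      simp only [multiLineDeriv]
      exact congrArg f (Subsingleton.elim _ _)
  | m+1, N, f, p, hp, c, u, x => by
      have hps : Function.Injective (fun j : Fin m => p j.succ) := by
        intro a b hab
        exact Fin.succ_injective m (hp hab)
      have inner_eq : ∀ z : Fin N → E,
          multiLineDeriv m (fun j => Pi.single (p j.succ) (u j.succ))
            (fun z' => f (fun l => z' (p l) - c)) z
          = (f.curryLeft (z (p 0) - c)) (fun l => u l.succ) := by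
        intro z
        have step1 : multiLineDeriv m (fun j => Pi.single (p j.succ) (u j.succ))
            (fun z' => f (fun l => z' (p l) - c)) z
          = multiLineDeriv m (fun j => Pi.single (p j.succ) (u j.succ))
            (fun z' => (f.curryLeft (z (p 0) - c)) (fun l => z' (p l.succ) - c)) z := by
          apply multiLineDeriv_congr
          intro s
          set z' := z + ∑ j, s j • (Pi.single (p j.succ) (u j.succ) : Fin N → E) with hz'
          have hz0 : z' (p 0) = z (p 0) := by
            have : (∑ j, s j • (Pi.single (p j.succ) (u j.succ) : Fin N → E)) (p 0) = 0 := by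
              rw [Finset.sum_apply]
              apply Finset.sum_eq_zero
              intro j _
              have hne : p 0 ≠ p j.succ := by
                intro h
                exact (Fin.succ_ne_zero j) (hp h).symm
              simp [Pi.single_eq_of_ne hne]
            simp [hz', this]
          have hcons : (fun l => z' (p l) - c)
              = Fin.cons (z' (p 0) - c) (fun l : Fin m => z' (p l.succ) - c) := by
            funext l
            refine Fin.cases ?_ ?_ l <;> simp
          rw [hcons, ← MultilinearMap.curryLeft_apply, hz0]
        rw [step1]
        exact multiLineDeriv_multilinear m N (f.curryLeft (z (p 0) - c))
          (fun j => p j.succ) hps c (fun j => u j.succ) z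
      simp only [multiLineDeriv]
      have key := lineDeriv_affine
        (multiLineDeriv m (fun j => Pi.single (p j.succ) (u j.succ))
          (fun z' => f (fun l => z' (p l) - c)))
        x (Pi.single (p 0) (u 0) : Fin N → E)
        ((f.curryLeft (x (p 0) - c)) (fun l => u l.succ))
        ((f.curryLeft (u 0)) (fun l => u l.succ)) ?_
      · rw [key]
        have hcu : Fin.cons (u 0) (fun l : Fin m => u l.succ) = u := by
          funext l; refine Fin.cases ?_ ?_ l <;> simp
        rw [MultilinearMap.curryLeft_apply, hcu]
      · intro t
        rw [inner_eq]
        have harg : (x + t • (Pi.single (p 0) (u 0) : Fin N → E)) (p 0) - c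
            = (x (p 0) - c) + t • u 0 := by
          simp [Pi.single_eq_same]; abel
        rw [harg, map_add, map_smul]
        simp [smul_eq_mul]

/-- The iterated simplex integral of a constant. -/
lemma iterInt_const : ∀ (m : ℕ) (c : ℝ) (C : ℝ),
    iterInt m c (fun _ => C) = C * c ^ m / m.factorial
  | 0, c, C => by simp [iterInt]
  | m+1, c, C => by
    simp only [iterInt]
    calc (∫ t in (0:ℝ)..c, iterInt m t (fun _ => C))
        = ∫ t in (0:ℝ)..c, (C / m.factorial) * t ^ m := by
          congr 1
          funext t
          rw [iterInt_const m t C]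
          ring
      _ = (C / m.factorial) * ((c ^ (m+1) - 0 ^ (m+1)) / (m+1)) := by
          rw [intervalIntegral.integral_const_mul, integral_pow]
      _ = C * c ^ (m+1) / (m+1).factorial := by
          rw [Nat.factorial_succ]
          push_cast
          rw [zero_pow (by omega), sub_zero, div_mul_div_comm,
            div_eq_div_iff (by positivity) (by positivity)]
          ring

/-- Expansion of a multilinear map on `(ℝ^n)^k` in the canonical basis. -/
lemma multilinear_expand {n k : ℕ}
    (f : MultilinearMap ℝ (fun _ : Fin k => (Fin n → ℝ)) ℝ) (z : Fin k → Fin n → ℝ) :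
    f z = ∑ idx : Fin k → Fin n,
      (∏ l, z l (idx l)) * f (fun l => (Pi.single (idx l) (1:ℝ) : Fin n → ℝ)) := by
  have hz : z = fun l => ∑ i, z l i • (Pi.single i (1:ℝ) : Fin n → ℝ) := by
    funext l j
    simp [Pi.single_apply, Finset.sum_apply, mul_ite]
  conv_lhs => rw [hz]
  rw [f.map_sum]
  apply Finset.sum_congr rfl
  intro idx _
  rw [f.map_smul_univ]
  simp [smul_eq_mul]

end AuxLemmas

/-- For a nonempty open convex `V ⊆ ℝ^n` and a map
`ω : V × V → Λ^k` into the alternating `k`-forms, all the iterated partial derivatives of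
`F_k ω` in the `q`-directions exist (for fixed `v, w` the map is smooth in `q`), and
`G_k (F_k ω) = ω` on `V × V`, where
`(G_k χ)(v,w) = ∑_{i_1,…,i_k} e^{i_1} ∧ ⋯ ∧ e^{i_k} ·
  ∫_0^1 dt_1 ∫_0^{t_1} dt_2 ⋯ ∫_0^{t_{k−1}} dt_k
    (∂^k χ / ∂q_1^{i_1} ⋯ ∂q_k^{i_k})(v, t_1 v + (1−t_1) w, …, t_k v + (1−t_k) w, w)`,
the resulting alternating forms being evaluated on arbitrary vectors `y_1, …, y_k`, with
`e^{i_1} ∧ ⋯ ∧ e^{i_k} (y_1,…,y_k) = ∑_{σ ∈ S_k} sgn(σ) y_{σ(1)}^{i_1} ⋯ y_{σ(k)}^{i_k}`. -/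
theorem G_comp_F_eq_id (n k : ℕ) (V : Set (Fin n → ℝ)) (hV : IsOpen V)
    (hne : V.Nonempty) (hconv : Convex ℝ V)
    (ω : (Fin n → ℝ) → (Fin n → ℝ) → (AlternatingMap ℝ (Fin n → ℝ) ℝ (Fin k))) :
    (∀ v w : Fin n → ℝ,
      ContDiff ℝ (⊤ : ℕ∞) (fun q : Fin k → (Fin n → ℝ) =>
        Fmap n k (fun v' w' => ⇑(ω v' w')) (assembleQ n k v w q)))
    ∧ (∀ v ∈ V, ∀ w ∈ V, ∀ y : Fin k → (Fin n → ℝ),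
        (∑ idx : Fin k → Fin n,
          (iterInt k 1 (fun t =>
              multiLineDeriv k (fun l => basisVec n k l (idx l))
                (Fmap n k (fun v' w' => ⇑(ω v' w'))) (segPoint n k v w t)))
            * (∑ σ : Equiv.Perm (Fin k),
                ((Equiv.Perm.sign σ : ℤ) : ℝ) * ∏ l : Fin k, y (σ l) (idx l)))
          = ω v w y) := by
  constructor
  · -- Smoothness in `q`
    intro v w
    have h0 : ∀ q : Fin k → Fin n → ℝ, assembleQ n k v w q 0 = v := by
      intro q; simp [assembleQ]
    have hl : ∀ q : Fin k → Fin n → ℝ, assembleQ n k v w q (Fin.last (k+1)) = w := by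
      intro q; simp [assembleQ]
    have hm : ∀ (q : Fin k → Fin n → ℝ) (l : Fin k),
        assembleQ n k v w q ⟨(l : ℕ) + 1, by have := l.isLt; omega⟩ = q l := by
      intro q l
      have h1 : (l : ℕ) + 1 ≠ 0 := by omega
      have h2 : (l : ℕ) + 1 ≠ k + 1 := by have := l.isLt; omega
      simp [assembleQ, h1, h2]
      intro h; exact absurd h (by have := l.isLt; omega)
    have key : (fun q : Fin k → Fin n → ℝ =>
        Fmap n k (fun v' w' => ⇑(ω v' w')) (assembleQ n k v w q))
        = fun q => ∑ idx : Fin k → Fin n,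
            (∏ l, (q l (idx l) - v (idx l))) *
              (ω v w) (fun l => (Pi.single (idx l) (1:ℝ) : Fin n → ℝ)) := by
      funext q
      simp only [Fmap, h0, hl, hm]
      have := multilinear_expand (ω v w).toMultilinearMap (fun l => q l - v)
      simpa using this
    rw [key]
    apply ContDiff.sum
    intro idx _
    refine ContDiff.mul ?_ contDiff_const
    apply contDiff_prod
    intro l _
    exact (((ContinuousLinearMap.proj (idx l)).comp
      (ContinuousLinearMap.proj l : (Fin k → Fin n → ℝ) →L[ℝ] (Fin n → ℝ))).contDiff).sub
      contDiff_const
  · -- The identity `G_k (F_k ω) = ω`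
    intro v _hv w _hw y
    set f := (ω v w).toMultilinearMap with hf
    set p : Fin k → Fin (k+2) := fun l => ⟨(l : ℕ) + 1, by have := l.isLt; omega⟩ with hpdef
    have hp : Function.Injective p := by
      intro a b hab
      have : (a : ℕ) + 1 = (b : ℕ) + 1 := congrArg Fin.val hab
      exact Fin.ext (by omega)
    -- the iterated directional derivative is constant:
    have hML : ∀ (idx : Fin k → Fin n) (t : Fin k → ℝ),
        multiLineDeriv k (fun l => basisVec n k l (idx l))
          (Fmap n k (fun v' w' => ⇑(ω v' w'))) (segPoint n k v w t)
        = f (fun l => (Pi.single (idx l) (1:ℝ) : Fin n → ℝ)) := by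
      intro idx t
      have hcongr : multiLineDeriv k (fun l => basisVec n k l (idx l))
            (Fmap n k (fun v' w' => ⇑(ω v' w'))) (segPoint n k v w t)
          = multiLineDeriv k (fun l => basisVec n k l (idx l))
            (fun z => f (fun l => z (p l) - v)) (segPoint n k v w t) := by
        apply multiLineDeriv_congr
        intro s
        set z := segPoint n k v w t + ∑ j, s j • basisVec n k j (idx j) with hzdef
        have hsum0 : ∀ (a : Fin (k+2)), (a : ℕ) ≠ 0 → ((a : ℕ) = k + 1 → False) → True := by
          intro _ _ _; trivial
        have hz0 : z 0 = v := by
          have h1 : segPoint n k v w t 0 = v := by simp [segPoint]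
          have h2 : (∑ j, s j • basisVec n k j (idx j)) 0 = 0 := by
            rw [Finset.sum_apply]
            apply Finset.sum_eq_zero
            intro j _
            have hne : (0 : Fin (k+2)) ≠ ⟨(j : ℕ) + 1, by have := j.isLt; omega⟩ := by
              intro h
              have : (0 : ℕ) = (j : ℕ) + 1 := congrArg Fin.val h
              omega
            simp [basisVec, Pi.single_eq_of_ne hne]
          simp [hzdef, h1, h2]
        have hzl : z (Fin.last (k+1)) = w := by
          have h1 : segPoint n k v w t (Fin.last (k+1)) = w := by simp [segPoint]
          have h2 : (∑ j, s j • basisVec n k j (idx j)) (Fin.last (k+1)) = 0 := by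
            rw [Finset.sum_apply]
            apply Finset.sum_eq_zero
            intro j _
            have hne : (Fin.last (k+1)) ≠ (⟨(j : ℕ) + 1, by have := j.isLt; omega⟩ : Fin (k+2)) := by
              intro h
              have : k + 1 = (j : ℕ) + 1 := congrArg Fin.val h
              have := j.isLt
              omega
            simp [basisVec, Pi.single_eq_of_ne hne]
          simp [hzdef, h1, h2]
        show (ω (z 0) (z (Fin.last (k+1)))) (fun l => z (p l) - z 0)
          = f (fun l => z (p l) - v)
        rw [hz0, hzl]
        rfl
      rw [hcongr]
      exact multiLineDeriv_multilinear k (k+2) f p hp v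
        (fun l => (Pi.single (idx l) (1:ℝ) : Fin n → ℝ)) (segPoint n k v w t)
    -- evaluate the iterated integrals
    have hint : ∀ idx : Fin k → Fin n,
        iterInt k 1 (fun t =>
          multiLineDeriv k (fun l => basisVec n k l (idx l))
            (Fmap n k (fun v' w' => ⇑(ω v' w'))) (segPoint n k v w t))
        = f (fun l => (Pi.single (idx l) (1:ℝ) : Fin n → ℝ)) / k.factorial := by
      intro idx
      have : (fun t : Fin k → ℝ =>
          multiLineDeriv k (fun l => basisVec n k l (idx l))
            (Fmap n k (fun v' w' => ⇑(ω v' w'))) (segPoint n k v w t))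
          = fun _ => f (fun l => (Pi.single (idx l) (1:ℝ) : Fin n → ℝ)) :=
        funext (hML idx)
      rw [this, iterInt_const]
      simp
    simp only [hint]
    -- final algebraic identity
    have hfac : ((k.factorial : ℝ)) ≠ 0 := Nat.cast_ne_zero.mpr k.factorial_ne_zero
    calc (∑ idx : Fin k → Fin n,
            (f (fun l => (Pi.single (idx l) (1:ℝ) : Fin n → ℝ)) / k.factorial)
            * (∑ σ : Equiv.Perm (Fin k),
                ((Equiv.Perm.sign σ : ℤ) : ℝ) * ∏ l : Fin k, y (σ l) (idx l)))
        = ∑ σ : Equiv.Perm (Fin k), ∑ idx : Fin k → Fin n,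
            (((Equiv.Perm.sign σ : ℤ) : ℝ) / k.factorial)
              * ((∏ l : Fin k, y (σ l) (idx l))
                  * f (fun l => (Pi.single (idx l) (1:ℝ) : Fin n → ℝ))) := by
          rw [Finset.sum_comm]
          apply Finset.sum_congr rfl
          intro idx _
          rw [Finset.mul_sum]
          apply Finset.sum_congr rfl
          intro σ _
          ring
      _ = ∑ σ : Equiv.Perm (Fin k),
            (((Equiv.Perm.sign σ : ℤ) : ℝ) / k.factorial) * f (fun l => y (σ l)) := by
          apply Finset.sum_congr rfl
          intro σ _
          rw [← Finset.mul_sum]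
          congr 1
          exact (multilinear_expand f (fun l => y (σ l))).symm
      _ = ∑ _σ : Equiv.Perm (Fin k), (1 / (k.factorial : ℝ)) * (ω v w) y := by
          apply Finset.sum_congr rfl
          intro σ _
          have hperm : f (fun l => y (σ l)) = Equiv.Perm.sign σ • (ω v w) y := by
            have := (ω v w).map_perm y σ
            exact this
          rw [hperm]
          have hsq : ((Equiv.Perm.sign σ : ℤ) : ℝ) * ((Equiv.Perm.sign σ : ℤ) : ℝ) = 1 := by
            have h := Int.units_mul_self (Equiv.Perm.sign σ)
            have : ((Equiv.Perm.sign σ * Equiv.Perm.sign σ : ℤˣ) : ℤ) = 1 := by rw [h]; rfl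
            push_cast at this
            exact_mod_cast this
          simp only [Units.smul_def, zsmul_eq_mul]
          rw [show (((Equiv.Perm.sign σ : ℤ) : ℝ) / k.factorial)
                * (((Equiv.Perm.sign σ : ℤ) : ℝ) * (ω v w) y)
              = (((Equiv.Perm.sign σ : ℤ) : ℝ) * ((Equiv.Perm.sign σ : ℤ) : ℝ))
                * (ω v w) y / k.factorial from by ring, hsq]
          ring
      _ = (ω v w) y := by
          rw [Finset.sum_const]
          simp only [Finset.card_univ, Fintype.card_perm, Fintype.card_fin, nsmul_eq_mul]
          field_simp
  done

end

end Stmt19
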